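/- There is no interpretation A : ((ℝ² → ℝ) × ℝ² × ℝ²) → ℝ² that (i) agrees with path methods, meaning for every continuously differentiable F : ℝ² → ℝ and every input x and baseline x' there exists a continuously differentiable path γ : [0,1] → ℝ² with γ(0) = x', γ(1) = x and A_i(x, F, x') = ∫₀¹ ∂ᵢF(γ(t)) γᵢ'(t) dt for i = 1, 2, and (ii) satisfies baseline invariance, meaning for all baselines x'₁, x'₂ with F(x'₁) = F(x'₂), all inputs x, and all indices i, j: A_i(x, F, x'₁) < A_j(x, F, x'₁) if and only if A_i(x, F, x'₂) < A_j(x, F, x'₂). -/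

import Mathlib

/-- The path-method attribution to coordinate `i`:
`A^γ_i(x, F, x') = ∫₀¹ ∂ᵢF(γ(t)) γᵢ'(t) dt`. -/
noncomputable def pathAttr {n : ℕ} (F : (Fin n → ℝ) → ℝ) (γ : ℝ → Fin n → ℝ)
    (i : Fin n) : ℝ :=
  ∫ t in (0:ℝ)..1, fderiv ℝ F (γ t) (Pi.single i 1) * deriv (fun s => γ s i) t

noncomputable def Lmap : ((Fin 2 → ℝ)) →L[ℝ] ℝ :=
  ContinuousLinearMap.proj (R := ℝ) (φ := fun _ : Fin 2 => ℝ) 0 -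
    ContinuousLinearMap.proj (R := ℝ) (φ := fun _ : Fin 2 => ℝ) 1

lemma pathAttr_lin (γ : ℝ → Fin 2 → ℝ) (hγ : ContDiff ℝ 1 γ) (i : Fin 2) :
    pathAttr (fun v => v 0 - v 1) γ i
      = Lmap (Pi.single i 1) * (γ 1 i - γ 0 i) := by
  have hF : (fun v : Fin 2 → ℝ => v 0 - v 1) = ⇑Lmap := by
    funext v; simp [Lmap]
  have hfd : ∀ y, fderiv ℝ (fun v : Fin 2 → ℝ => v 0 - v 1) y = Lmap := by
    intro y; rw [hF]; exact Lmap.fderiv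
  have hg : ContDiff ℝ 1 (fun s => γ s i) :=
    (ContinuousLinearMap.proj (R := ℝ) (φ := fun _ : Fin 2 => ℝ) i).contDiff.comp hγ
  have hint : (∫ t in (0:ℝ)..1, deriv (fun s => γ s i) t) = γ 1 i - γ 0 i := by
    apply intervalIntegral.integral_deriv_eq_sub
    · intro t _; exact (hg.differentiable one_ne_zero).differentiableAt
    · exact (hg.continuous_deriv le_rfl).intervalIntegrable 0 1
  unfold pathAttr
  simp only [hfd]
  rw [intervalIntegral.integral_const_mul, hint]

lemma Lmap_single : ∀ i : Fin 2, Lmap (Pi.single i 1) = ![1, -1] i := by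
  intro i
  fin_cases i <;> simp [Lmap, Pi.single_eq_same, Pi.single_eq_of_ne]

/-- There is no interpretation `A` on `ℝ²` that both agrees with path methods and
satisfies baseline invariance. -/
theorem stmt_7 :
    ¬ ∃ A : ((Fin 2 → ℝ) → ℝ) → (Fin 2 → ℝ) → (Fin 2 → ℝ) → (Fin 2 → ℝ),
      (∀ F : (Fin 2 → ℝ) → ℝ, ContDiff ℝ 1 F → ∀ x x' : Fin 2 → ℝ,
        ∃ γ : ℝ → Fin 2 → ℝ, ContDiff ℝ 1 γ ∧ γ 0 = x' ∧ γ 1 = x ∧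
          ∀ i : Fin 2, A F x x' i = pathAttr F γ i) ∧
      (∀ F : (Fin 2 → ℝ) → ℝ, ContDiff ℝ 1 F → ∀ x'₁ x'₂ : Fin 2 → ℝ,
        F x'₁ = F x'₂ → ∀ x : Fin 2 → ℝ, ∀ i j : Fin 2,
          (A F x x'₁ i < A F x x'₁ j ↔ A F x x'₂ i < A F x x'₂ j)) := by
  rintro ⟨A, h1, h2⟩
  set F : (Fin 2 → ℝ) → ℝ := fun v => v 0 - v 1 with hFdef
  have hF : ContDiff ℝ 1 F := by
    have : F = ⇑Lmap := by funext v; simp [Lmap, hFdef]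
    rw [this]; exact Lmap.contDiff
  set x : Fin 2 → ℝ := ![1, 0] with hx
  set b1 : Fin 2 → ℝ := ![0, 0] with hb1
  set b2 : Fin 2 → ℝ := ![1, 1] with hb2
  have key : ∀ b : Fin 2 → ℝ, ∀ i : Fin 2,
      A F x b i = ![1, -1] i * (x i - b i) := by
    intro b i
    obtain ⟨γ, hγ, hγ0, hγ1, hAi⟩ := h1 F hF x b
    rw [hAi i, hFdef, pathAttr_lin γ hγ i, hγ0, hγ1, Lmap_single]
  have hFb : F b1 = F b2 := by simp [hFdef, hb1, hb2]
  have h := (h2 F hF b1 b2 hFb x 1 0)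
  rw [key b1 1, key b1 0, key b2 1, key b2 0] at h
  norm_num [hx, hb1, hb2] at h
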